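/- arXiv:1005.3634 — 3 statements merged into one kernel-verified Lean document; each statement's English description precedes it below -/
import Mathlib

section
/- Let X be a complex Banach space and T : X → X a bounded linear operator. If T is Li-Yorke chaotic, then the spectrum of T intersects the unit circle, i.e. there exists λ ∈ σ(T) with |λ| = 1. -/
/-! If `σ(T)` misses the unit circle, it misses a closed annulus `r ≤ |μ| ≤ s` with `r < 1 < s`.
Integrating `μ ^ n • R(μ) x` over circles in that annulus and using `R(μ) (μ x - T x) = x`
gives `2πi T^m z = ∮_{|μ|=r} μ^m R(μ) z dμ - ∮_{|μ|=s} μ^(-1-k) R(μ) T^(m+1+k) z dμ`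
(both circles may be used, by Cauchy's theorem on the annulus), hence
`‖T^m z‖ ≤ M (r^(m+1) ‖z‖ + s^(-k) ‖T^(m+1+k) z‖)` with `M` a bound of the resolvent.
So an orbit that comes arbitrarily close to `0` satisfies `‖T^m z‖ ≤ M r^(m+1) ‖z‖` and tends
to `0`; for `z = x - y` with `{x, y}` a Li-Yorke pair this contradicts
`limsup ‖T^n x - T^n y‖ > 0`. -/
open Filter Topology
open scoped ENNReal

section Defs

variable {𝕜 : Type*} [RCLike 𝕜] {X : Type*} [NormedAddCommGroup X] [NormedSpace 𝕜 X]

/-- The upper density of a set of natural numbers. -/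
noncomputable def upperDensity (A : Set ℕ) : ℝ :=
  Filter.limsup (fun n : ℕ => ((A ∩ Set.Icc 1 n).ncard : ℝ) / n) Filter.atTop

/-- The lower density of a set of natural numbers. -/
noncomputable def lowerDensity (A : Set ℕ) : ℝ :=
  Filter.liminf (fun n : ℕ => ((A ∩ Set.Icc 1 n).ncard : ℝ) / n) Filter.atTop

/-- `{x, y}` is a Li-Yorke pair for `T`. -/
def IsLiYorkePair (T : X →L[𝕜] X) (x y : X) : Prop :=
  Filter.liminf (fun n : ℕ => (‖(T ^ n) x - (T ^ n) y‖₊ : ℝ≥0∞)) Filter.atTop = 0 ∧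
  0 < Filter.limsup (fun n : ℕ => (‖(T ^ n) x - (T ^ n) y‖₊ : ℝ≥0∞)) Filter.atTop

/-- `T` is Li-Yorke chaotic. -/
def LiYorkeChaotic (T : X →L[𝕜] X) : Prop :=
  ∃ Γ : Set X, ¬ Γ.Countable ∧ ∀ x ∈ Γ, ∀ y ∈ Γ, x ≠ y → IsLiYorkePair T x y

/-- `x` is an irregular vector for `T`. -/
def IrregularVector (T : X →L[𝕜] X) (x : X) : Prop :=
  Filter.liminf (fun n : ℕ => (‖(T ^ n) x‖₊ : ℝ≥0∞)) Filter.atTop = 0 ∧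
  Filter.limsup (fun n : ℕ => (‖(T ^ n) x‖₊ : ℝ≥0∞)) Filter.atTop = ⊤

/-- `x` is a distributionally irregular vector for `T`. -/
def DistIrregularVector (T : X →L[𝕜] X) (x : X) : Prop :=
  ∃ a b : ℕ → ℕ, StrictMono a ∧ StrictMono b ∧ (∀ k, 0 < a k) ∧ (∀ k, 0 < b k) ∧
    upperDensity (Set.range a) = 1 ∧ upperDensity (Set.range b) = 1 ∧
    Filter.Tendsto (fun k => ‖(T ^ (a k)) x‖) Filter.atTop (nhds 0) ∧
    Filter.Tendsto (fun k => ‖(T ^ (b k)) x‖) Filter.atTop Filter.atTop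

/-- `Γ` is a distributionally `ε`-scrambled set for `T`. -/
def DistScrambled (T : X →L[𝕜] X) (Γ : Set X) (ε : ℝ) : Prop :=
  ∀ x ∈ Γ, ∀ y ∈ Γ, x ≠ y →
    lowerDensity {n : ℕ | ‖(T ^ n) x - (T ^ n) y‖ < ε} = 0 ∧
    ∀ τ > (0:ℝ), upperDensity {n : ℕ | ‖(T ^ n) x - (T ^ n) y‖ < τ} = 1

/-- `T` is distributionally chaotic. -/
def DistChaotic (T : X →L[𝕜] X) : Prop :=
  ∃ Γ : Set X, ∃ ε > (0:ℝ), ¬ Γ.Countable ∧ DistScrambled T Γ ε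

/-- The Li-Yorke Chaos Criterion. -/
def LYChaosCriterion (T : X →L[𝕜] X) : Prop :=
  ∃ n : ℕ → ℕ, ∃ X₀ : Set X, StrictMono n ∧ (∀ k, 0 < n k) ∧
    (∀ x ∈ X₀, Filter.Tendsto (fun k : ℕ => (T ^ (n k)) x) Filter.atTop (nhds 0)) ∧
    ∀ C : ℝ, ∃ m : ℕ, ∃ y ∈ closure ((Submodule.span 𝕜 X₀ : Submodule 𝕜 X) : Set X),
      C * ‖y‖ < ‖(T ^ m) y‖

/-- The Strong Distributional Chaos Criterion with constant `r`. -/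
def SDCCriterion (T : X →L[𝕜] X) (r : ℝ) : Prop :=
  ∀ m : ℕ, ∃ x : X, x ≠ 0 ∧
    Filter.Tendsto (fun k : ℕ => ‖(T ^ k) x‖) Filter.atTop (nhds 0) ∧
    ∀ i : ℕ, 1 ≤ i → i ≤ m → r ^ i * ‖x‖ ≤ ‖(T ^ i) x‖

/-- The Distributional Chaos Criterion. -/
def DCCriterion (T : X →L[𝕜] X) : Prop :=
  ∃ x y : ℕ → X, ∃ N : ℕ → ℕ,
    (∀ m, x m ≠ 0) ∧ (∀ m, y m ≠ 0) ∧
    (∀ m, y m ∈ closure ((Submodule.span 𝕜 (Set.range x) : Submodule 𝕜 X) : Set X)) ∧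
    (∀ m, Filter.Tendsto (fun n : ℕ => (T ^ n) (x m)) Filter.atTop (nhds 0)) ∧
    (∀ m, 0 < N m) ∧ Monotone N ∧ Filter.Tendsto N Filter.atTop Filter.atTop ∧
    Filter.Tendsto
      (fun m : ℕ =>
        (({i : ℕ | i < N m ∧ (m : ℝ) * ‖y m‖ ≤ ‖(T ^ i) (y m)‖}).ncard : ℝ) / N m)
      Filter.atTop (nhds 1)

/-- `T` admits a dense irregular manifold. -/
def DenseIrregularManifold (T : X →L[𝕜] X) : Prop :=
  ∃ Y : Submodule 𝕜 X, Dense (Y : Set X) ∧ ∀ y ∈ Y, y ≠ 0 → IrregularVector T y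

/-- `T` admits a dense distributionally irregular manifold. -/
def DenseDistIrregularManifold (T : X →L[𝕜] X) : Prop :=
  ∃ Y : Submodule 𝕜 X, Dense (Y : Set X) ∧ ∀ y ∈ Y, y ≠ 0 → DistIrregularVector T y


/-- `S` is strictly singular: it is not bounded below on any infinite-dimensional subspace. -/
def StrictlySingular (S : X →L[𝕜] X) : Prop :=
  ∀ M : Submodule 𝕜 X, ¬ FiniteDimensional 𝕜 M →
    ¬ ∃ c : ℝ, 0 < c ∧ ∀ x ∈ M, c * ‖x‖ ≤ ‖S x‖

end Defs


open Metric Real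

lemma resolvent_apply_smul_sub {𝕜 E : Type*} [NontriviallyNormedField 𝕜] [NormedAddCommGroup E]
    [NormedSpace 𝕜 E] {T : E →L[𝕜] E} {μ : 𝕜} (hμ : μ ∈ resolventSet 𝕜 T) (x : E) :
    resolvent T μ (μ • x - T x) = x := by
  have h : resolvent T μ * (algebraMap 𝕜 (E →L[𝕜] E) μ - T) = 1 := by
    rw [spectrum.resolvent_eq hμ]
    exact hμ.unit.inv_mul
  simpa [Algebra.algebraMap_eq_smul_one] using congr($h x)

lemma spectrum.exists_annulus_subset_resolventSet {A : Type*} [NormedRing A] [NormedAlgebra ℂ A]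
    [CompleteSpace A] {a : A} {ρ : ℝ} (hρ : 0 < ρ) (ha : ∀ μ ∈ spectrum ℂ a, ‖μ‖ ≠ ρ) :
    ∃ r s, 0 < r ∧ r < ρ ∧ ρ < s ∧ closedBall (0 : ℂ) s \ ball 0 r ⊆ resolventSet ℂ a := by
  have hclosed : IsClosed (norm '' spectrum ℂ a) :=
    ((spectrum.isCompact a).image continuous_norm).isClosed
  obtain ⟨ε, hε, hball⟩ :=
    Metric.isOpen_iff.1 hclosed.isOpen_compl ρ fun ⟨μ, hμ, h⟩ => ha μ hμ h
  obtain ⟨δ, hδ, hδε, hδρ⟩ : ∃ δ, 0 < δ ∧ δ < ε ∧ δ < ρ :=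
    ⟨min ε ρ / 2, by positivity, (half_lt_self (by positivity)).trans_le (min_le_left _ _),
      (half_lt_self (by positivity)).trans_le (min_le_right _ _)⟩
  refine ⟨ρ - δ, ρ + δ, by linarith, by linarith, by linarith, fun μ hμ => ?_⟩
  by_contra hμσ
  refine hball ?_ ⟨μ, hμσ, rfl⟩
  simp only [Set.mem_sdiff, mem_closedBall_zero_iff, mem_ball_zero_iff, not_lt] at hμ
  rw [mem_ball, Real.dist_eq, abs_lt]
  constructor <;> linarith

section Resolvent

variable {E : Type*} [NormedAddCommGroup E] [NormedSpace ℂ E] [CompleteSpace E] {T : E →L[ℂ] E}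

lemma differentiableAt_zpow_smul_resolvent_apply {μ : ℂ} (hμ₀ : μ ≠ 0)
    (hμ : μ ∈ resolventSet ℂ T) (n : ℤ) (x : E) :
    DifferentiableAt ℂ (fun w : ℂ => w ^ n • resolvent T w x) μ :=
  (differentiableAt_zpow.2 (Or.inl hμ₀)).smul
    ((spectrum.hasDerivAt_resolvent_const_left hμ).differentiableAt.clm_apply
      (differentiableAt_const x))

lemma circleIntegrable_zpow_smul_resolvent_apply {ρ : ℝ} (hρ : 0 < ρ)
    (hT : sphere (0 : ℂ) ρ ⊆ resolventSet ℂ T) (n : ℤ) (x : E) :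
    CircleIntegrable (fun μ : ℂ => μ ^ n • resolvent T μ x) 0 ρ := by
  refine ContinuousOn.circleIntegrable hρ.le fun μ hμ => ?_
  have hμ₀ : μ ≠ 0 := ne_zero_of_mem_sphere hρ.ne' ⟨μ, hμ⟩
  exact (differentiableAt_zpow_smul_resolvent_apply hμ₀ (hT hμ) n x).continuousAt.continuousWithinAt

end Resolvent

namespace ContinuousLinearMap

variable {E : Type*} [NormedAddCommGroup E] [NormedSpace ℂ E] (T : E →L[ℂ] E)

noncomputable def resolventMoment (ρ : ℝ) (n : ℤ) (x : E) : E :=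
  ∮ μ in C(0, ρ), μ ^ n • resolvent T μ x

variable {T} {ρ : ℝ}

lemma norm_resolventMoment_le (hρ : 0 ≤ ρ) {M : ℝ}
    (hM : ∀ μ ∈ sphere (0 : ℂ) ρ, ‖resolvent T μ‖ ≤ M) (n : ℤ) (x : E) :
    ‖T.resolventMoment ρ n x‖ ≤ 2 * π * ρ * (ρ ^ n * (M * ‖x‖)) := by
  refine circleIntegral.norm_integral_le_of_norm_le_const hρ fun μ hμ => ?_
  have hR := (resolvent T μ).le_of_opNorm_le (hM μ hμ) x
  rw [mem_sphere_zero_iff_norm] at hμ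
  rw [norm_smul, norm_zpow, hμ]
  gcongr

variable [CompleteSpace E]

lemma resolventMoment_add_one (hρ : 0 < ρ) (hT : sphere (0 : ℂ) ρ ⊆ resolventSet ℂ T)
    (n : ℤ) (x : E) :
    T.resolventMoment ρ (n + 1) x = (∮ μ in C(0, ρ), μ ^ n) • x + T.resolventMoment ρ n (T x) := by
  have hsub : Set.EqOn (fun μ : ℂ => μ ^ (n + 1) • resolvent T μ x - μ ^ n • resolvent T μ (T x))
      (fun μ => μ ^ n • x) (sphere 0 ρ) := fun μ hμ => by
    have hμ₀ : μ ≠ 0 := ne_zero_of_mem_sphere hρ.ne' ⟨μ, hμ⟩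
    dsimp only
    rw [zpow_add_one₀ hμ₀, mul_smul, ← smul_sub, ← map_smul, ← map_sub,
      resolvent_apply_smul_sub (hT hμ)]
  have h := circleIntegral.integral_sub (circleIntegrable_zpow_smul_resolvent_apply hρ hT (n + 1) x)
    (circleIntegrable_zpow_smul_resolvent_apply hρ hT n (T x))
  rw [circleIntegral.integral_congr hρ.le hsub, circleIntegral.integral_smul_const] at h
  exact eq_add_of_sub_eq h.symm

lemma resolventMoment_add_one_of_ne (hρ : 0 < ρ) (hT : sphere (0 : ℂ) ρ ⊆ resolventSet ℂ T)
    {n : ℤ} (hn : n ≠ -1) (x : E) :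
    T.resolventMoment ρ (n + 1) x = T.resolventMoment ρ n (T x) := by
  have h : (∮ μ in C(0, ρ), μ ^ n) = 0 := by
    simpa using circleIntegral.integral_sub_zpow_of_ne hn 0 0 ρ
  simpa [h] using resolventMoment_add_one hρ hT n x

lemma resolventMoment_zero (hρ : 0 < ρ) (hT : sphere (0 : ℂ) ρ ⊆ resolventSet ℂ T) (x : E) :
    T.resolventMoment ρ 0 x = (2 * π * Complex.I) • x + T.resolventMoment ρ (-1) (T x) := by
  have h : (∮ μ in C(0, ρ), μ⁻¹) = 2 * π * Complex.I := by
    simpa using circleIntegral.integral_sub_center_inv 0 hρ.ne'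
  simpa [h] using resolventMoment_add_one hρ hT (-1) x

lemma resolventMoment_natCast (hρ : 0 < ρ) (hT : sphere (0 : ℂ) ρ ⊆ resolventSet ℂ T)
    (m : ℕ) (x : E) : T.resolventMoment ρ m x = T.resolventMoment ρ 0 ((T ^ m) x) := by
  induction m generalizing x with
  | zero => simp
  | succ m ih =>
    rw [Nat.cast_succ, resolventMoment_add_one_of_ne hρ hT (by omega), ih, ← mul_apply_eq_comp,
      ← pow_succ]

lemma resolventMoment_neg_one (hρ : 0 < ρ) (hT : sphere (0 : ℂ) ρ ⊆ resolventSet ℂ T)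
    (k : ℕ) (x : E) : T.resolventMoment ρ (-1) x = T.resolventMoment ρ (-1 - k) ((T ^ k) x) := by
  induction k generalizing x with
  | zero => simp
  | succ k ih =>
    rw [ih, show -1 - (k : ℤ) = -1 - ((k + 1 : ℕ) : ℤ) + 1 by push_cast; ring,
      resolventMoment_add_one_of_ne hρ hT (by omega), ← mul_apply_eq_comp, ← pow_succ']

lemma two_pi_I_smul_pow_apply (hρ : 0 < ρ) (hT : sphere (0 : ℂ) ρ ⊆ resolventSet ℂ T)
    (m k : ℕ) (x : E) :
    (2 * π * Complex.I) • (T ^ m) x =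
      T.resolventMoment ρ m x - T.resolventMoment ρ (-1 - k) ((T ^ (m + 1 + k)) x) := by
  have hpow : (T ^ k) (T ((T ^ m) x)) = (T ^ (m + 1 + k)) x := by
    rw [← mul_apply_eq_comp, ← mul_apply_eq_comp, ← pow_succ, ← pow_add,
      show k + 1 + m = m + 1 + k by omega]
  rw [resolventMoment_natCast hρ hT, resolventMoment_zero hρ hT,
    resolventMoment_neg_one hρ hT k, hpow, add_sub_cancel_right]

lemma resolventMoment_eq_of_annulus {r s : ℝ} (hr : 0 < r) (hrs : r ≤ s)
    (hT : closedBall (0 : ℂ) s \ ball 0 r ⊆ resolventSet ℂ T) (n : ℤ) (x : E) :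
    T.resolventMoment s n x = T.resolventMoment r n x := by
  have hdiff : ∀ μ ∈ closedBall (0 : ℂ) s \ ball 0 r,
      DifferentiableAt ℂ (fun w : ℂ => w ^ n • resolvent T w x) μ := fun μ hμ =>
    differentiableAt_zpow_smul_resolvent_apply (fun h => hμ.2 (h ▸ mem_ball_self hr)) (hT hμ) n x
  refine Complex.circleIntegral_eq_of_differentiable_on_annulus_off_countable hr hrs
    Set.countable_empty (fun μ hμ => (hdiff μ hμ).continuousAt.continuousWithinAt)
    fun μ hμ => hdiff μ ⟨ball_subset_closedBall hμ.1.1, fun h => hμ.1.2 (ball_subset_closedBall h)⟩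

lemma norm_pow_apply_le_of_annulus {r s M : ℝ} (hr : 0 < r) (hrs : r ≤ s)
    (hT : closedBall (0 : ℂ) s \ ball 0 r ⊆ resolventSet ℂ T)
    (hM : ∀ μ ∈ closedBall (0 : ℂ) s \ ball 0 r, ‖resolvent T μ‖ ≤ M) (z : E) (m k : ℕ) :
    ‖(T ^ m) z‖ ≤ M * (r ^ (m + 1) * ‖z‖ + (s ^ k)⁻¹ * ‖(T ^ (m + 1 + k)) z‖) := by
  have hs : 0 < s := hr.trans_le hrs
  have hsphere : ∀ ρ, r ≤ ρ → ρ ≤ s → sphere (0 : ℂ) ρ ⊆ closedBall 0 s \ ball 0 r :=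
    fun ρ hrρ hρs μ hμ => by
      rw [mem_sphere_zero_iff_norm] at hμ
      simp only [Set.mem_sdiff, mem_closedBall_zero_iff, mem_ball_zero_iff, hμ, not_lt]
      exact ⟨hρs, hrρ⟩
  have hid := two_pi_I_smul_pow_apply hr ((hsphere r le_rfl hrs).trans hT) m k z
  rw [← resolventMoment_eq_of_annulus hr hrs hT (-1 - k)] at hid
  have hr' : r * r ^ (m : ℤ) = r ^ (m + 1) := by rw [zpow_natCast, pow_succ']
  have hs' : s * s ^ (-1 - k : ℤ) = (s ^ k)⁻¹ := by
    rw [zpow_sub₀ hs.ne', zpow_neg_one, zpow_natCast]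
    field_simp
  have key : 2 * π * ‖(T ^ m) z‖ ≤
      2 * π * (M * (r ^ (m + 1) * ‖z‖ + (s ^ k)⁻¹ * ‖(T ^ (m + 1 + k)) z‖)) :=
    calc 2 * π * ‖(T ^ m) z‖ = ‖(2 * π * Complex.I) • (T ^ m) z‖ := by
          simp [norm_smul, abs_of_pos pi_pos]
      _ ≤ _ := hid ▸ norm_sub_le _ _
      _ ≤ _ := add_le_add
          (norm_resolventMoment_le hr.le (fun μ hμ => hM μ (hsphere r le_rfl hrs hμ)) _ _)
          (norm_resolventMoment_le hs.le (fun μ hμ => hM μ (hsphere s hrs le_rfl hμ)) _ _)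
      _ = _ := by rw [← hr', ← hs']; ring
  exact le_of_mul_le_mul_left key (by positivity)

theorem tendsto_pow_apply_zero_of_mapClusterPt (hT : ∀ μ ∈ spectrum ℂ T, ‖μ‖ ≠ 1) {z : E}
    (hz : MapClusterPt (0 : E) atTop fun n => (T ^ n) z) :
    Tendsto (fun n => (T ^ n) z) atTop (𝓝 0) := by
  obtain ⟨r, s, hr, hr1, hs1, hA⟩ := spectrum.exists_annulus_subset_resolventSet one_pos hT
  obtain ⟨M, hM₀, hM⟩ := (((isCompact_closedBall 0 s).diff isOpen_ball).image_of_continuousOn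
    fun μ hμ => (spectrum.hasDerivAt_resolvent_const_left (hA hμ)).continuousAt.continuousWithinAt
    ).isBounded.exists_pos_norm_le
  obtain ⟨ψ, hψ, hψz⟩ := hz.tendsto_subseq
  have hdecay : ∀ m, ‖(T ^ m) z‖ ≤ M * (r ^ (m + 1) * ‖z‖) := fun m => by
    have hlim : Tendsto (fun j => M * (r ^ (m + 1) * ‖z‖ + ‖(T ^ ψ j) z‖)) atTop
        (𝓝 (M * (r ^ (m + 1) * ‖z‖ + 0))) :=
      ((tendsto_norm_zero.comp hψz).const_add _).const_mul M
    have hev : ∀ᶠ j in atTop, ‖(T ^ m) z‖ ≤ M * (r ^ (m + 1) * ‖z‖ + ‖(T ^ ψ j) z‖) :=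
      (hψ.tendsto_atTop.eventually_ge_atTop (m + 1)).mono fun j hj => by
        obtain ⟨k, hk⟩ := Nat.exists_eq_add_of_le hj
        calc ‖(T ^ m) z‖ ≤ M * (r ^ (m + 1) * ‖z‖ + (s ^ k)⁻¹ * ‖(T ^ (m + 1 + k)) z‖) :=
              norm_pow_apply_le_of_annulus hr (by linarith) hA (fun μ hμ => hM _ ⟨μ, hμ, rfl⟩) z m k
          _ ≤ M * (r ^ (m + 1) * ‖z‖ + ‖(T ^ ψ j) z‖) := by
              rw [hk]
              gcongr
              exact mul_le_of_le_one_left (norm_nonneg _)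
                (inv_le_one_of_one_le₀ (one_le_pow₀ hs1.le))
    simpa using ge_of_tendsto hlim hev
  refine squeeze_zero_norm hdecay ?_
  simpa using (((tendsto_pow_atTop_nhds_zero_of_lt_one hr.le hr1).comp
    (tendsto_add_atTop_nat 1)).mul_const ‖z‖).const_mul M

end ContinuousLinearMap

section LiYorke

variable {𝕜 : Type*} [RCLike 𝕜] {X : Type*} [NormedAddCommGroup X] [NormedSpace 𝕜 X]
  {T : X →L[𝕜] X} {x y : X}

lemma IsLiYorkePair.mapClusterPt (h : IsLiYorkePair T x y) :
    MapClusterPt (0 : X) atTop fun n => (T ^ n) (x - y) := by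
  refine Metric.nhds_basis_ball.mapClusterPt_iff_frequently.2 fun ε hε => ?_
  have hlt : liminf (fun n => (‖(T ^ n) x - (T ^ n) y‖₊ : ℝ≥0∞)) atTop < ENNReal.ofReal ε :=
    h.1 ▸ ENNReal.ofReal_pos.2 hε
  refine (frequently_lt_of_liminf_lt (by isBoundedDefault) hlt).mono fun n hn => ?_
  rwa [mem_ball_zero_iff, map_sub, ← ENNReal.ofReal_lt_ofReal_iff hε, ofReal_norm]

lemma IsLiYorkePair.not_tendsto (h : IsLiYorkePair T x y) :
    ¬ Tendsto (fun n => (T ^ n) (x - y)) atTop (𝓝 0) := fun ht => by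
  have hnorm : Tendsto (fun n => (‖(T ^ n) x - (T ^ n) y‖₊ : ℝ≥0∞)) atTop (𝓝 0) := by
    simpa [map_sub, enorm_eq_nnnorm] using ht.enorm
  exact h.2.ne' hnorm.limsup_eq

lemma LiYorkeChaotic.exists_isLiYorkePair (h : LiYorkeChaotic T) : ∃ x y, IsLiYorkePair T x y := by
  obtain ⟨Γ, hΓ, hpair⟩ := h
  obtain ⟨x, hx, y, hy, hxy⟩ := Set.not_subsingleton_iff.1 (mt Set.Subsingleton.countable hΓ)
  exact ⟨x, y, hpair x hx y hy hxy⟩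

end LiYorke

/-- If `T` is Li-Yorke chaotic, the spectrum of `T` meets the unit circle. -/
theorem liYorkeChaotic_spectrum_inter_unitCircle
    {X : Type*} [NormedAddCommGroup X] [NormedSpace ℂ X] [CompleteSpace X]
    (T : X →L[ℂ] X) (h : LiYorkeChaotic T) :
    ∃ lam ∈ spectrum ℂ T, ‖lam‖ = 1 := by
  by_contra! hT
  obtain ⟨x, y, hxy⟩ := h.exists_isLiYorkePair
  exact hxy.not_tendsto (T.tendsto_pow_apply_zero_of_mapClusterPt hT hxy.mapClusterPt)
end

section
/- Let X be a Banach space and T : X → X a bounded linear operator. Then T is Li-Yorke chaotic if and only if T satisfies the Li-Yorke Chaos Criterion. -/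
open Filter Topology
open scoped ENNReal

/-!
A pair `x, y` is Li-Yorke exactly when `x - y` is a semi-irregular vector, and a single
semi-irregular vector `z` makes the whole line `𝕜 • z` scrambled; so both sides of the equivalence
say that `T` has a semi-irregular vector. The orbit of such a `z` satisfies the criterion: a
subsequence of `Tⁿ z` tends to `0`, and uniformly bounded powers on the span of the orbit would make
the whole orbit tend to `0`. Conversely, on the closure `Y` of the span of `X₀` the vectors whose
orbit clusters at `0` form a residual set (it contains the dense span), and so, by Banach-Steinhaus,
do those with unbounded orbit; Baire's theorem in `Y` gives a vector with both properties.
-/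

open Set

theorem liminf_enorm_eq_zero_iff_mapClusterPt {α E : Type*} [NormedAddCommGroup E]
    {l : Filter α} [l.NeBot] {g : α → E} :
    liminf (fun a => ‖g a‖ₑ) l = 0 ↔ MapClusterPt 0 l g := by
  have hnorm : MapClusterPt 0 l g ↔ MapClusterPt 0 l (fun a => ‖g a‖ₑ) := by
    simp only [Metric.nhds_basis_eball.mapClusterPt_iff_frequently,
      ENNReal.nhds_zero_basis.mapClusterPt_iff_frequently, Metric.mem_eball, edist_zero_right,
      mem_Iio]
  rw [hnorm]
  exact ⟨fun h => h ▸ MapClusterPt.liminf, fun h => nonpos_iff_eq_zero.1 h.liminf_le⟩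

theorem limsup_enorm_pos_iff_not_tendsto {α E : Type*} [NormedAddCommGroup E]
    {l : Filter α} [l.NeBot] {g : α → E} :
    0 < limsup (fun a => ‖g a‖ₑ) l ↔ ¬ Tendsto g l (𝓝 0) := by
  rw [pos_iff_ne_zero, tendsto_zero_iff_enorm_tendsto_zero, not_iff_not]
  exact ⟨fun h => tendsto_of_le_liminf_of_limsup_le zero_le h.le, Tendsto.limsup_eq⟩

theorem eventually_residual_frequently_mem {Y : Type*} [TopologicalSpace Y] {U : ℕ → Set Y}
    (hU : ∀ n, IsOpen (U n)) (hD : Dense {y | ∃ᶠ n in atTop, y ∈ U n}) :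
    ∀ᶠ y in residual Y, ∃ᶠ n in atTop, y ∈ U n := by
  have hset : {y | ∃ᶠ n in atTop, y ∈ U n} = ⋂ N, ⋃ n ≥ N, U n := by
    ext y; simp [frequently_atTop]
  refine Filter.mem_of_superset (countable_iInter_mem.2 fun N => residual_of_dense_open
    (isOpen_biUnion fun n _ => hU n) (hD.mono ?_)) hset.superset
  exact hset.subset.trans (iInter_subset _ N)

theorem dense_setOf_not_bddAbove_norm_apply {ι 𝕜 E F : Type*} [NontriviallyNormedField 𝕜]
    [NormedAddCommGroup E] [NormedSpace 𝕜 E] [NormedAddCommGroup F] [NormedSpace 𝕜 F]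
    [CompleteSpace E] {g : ι → E →L[𝕜] F} (h : ¬ BddAbove (range fun i => ‖g i‖)) :
    Dense {x | ¬ BddAbove (range fun i => ‖g i x‖)} := by
  -- The vectors with bounded orbit form a subspace; it has empty interior unless it is everything.
  let S : Submodule 𝕜 E :=
    (lpSubmodule 𝕜 (fun _ : ι => F) ∞).comap (LinearMap.pi fun i => (g i : E →ₗ[𝕜] F))
  have hS : (S : Set E) = {x | BddAbove (range fun i => ‖g i x‖)} := by
    ext x; exact memℓp_infty_iff
  have hint : interior (S : Set E) = ∅ := by
    refine not_nonempty_iff_eq_empty.1 fun hne => h ?_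
    have htop := S.eq_top_of_nonempty_interior' hne
    obtain ⟨C, hC⟩ := banach_steinhaus (g := g) fun x => by
      have hx : x ∈ (S : Set E) := by rw [htop]; trivial
      rw [hS] at hx
      obtain ⟨C, hC⟩ := hx
      exact ⟨C, fun i => hC ⟨i, rfl⟩⟩
    exact ⟨C, forall_mem_range.2 hC⟩
  rw [interior_eq_empty_iff_dense_compl, hS] at hint
  exact hint

theorem eventually_residual_mapClusterPt {Y Z : Type*} [TopologicalSpace Y] [PseudoMetricSpace Z]
    {f : ℕ → Y → Z} (hf : ∀ n, Continuous (f n)) {z : Z}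
    (hD : Dense {y | MapClusterPt z atTop fun n => f n y}) :
    ∀ᶠ y in residual Y, MapClusterPt z atTop fun n => f n y := by
  simp only [Metric.nhds_basis_ball_inv_nat_succ.mapClusterPt_iff_frequently, forall_true_left]
    at hD ⊢
  refine eventually_countable_forall.2 fun q => eventually_residual_frequently_mem
    (fun n => Metric.isOpen_ball.preimage (hf n)) (hD.mono fun y hy => ?_)
  exact hy q

section LiYorke

variable {𝕜 : Type*} [RCLike 𝕜] {X : Type*} [NormedAddCommGroup X] [NormedSpace 𝕜 X]
  {T : X →L[𝕜] X}

/-- The paper's semi-irregular vectors: `liminf ‖Tⁿ z‖ = 0 < limsup ‖Tⁿ z‖`. -/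
def SemiIrregularVector (T : X →L[𝕜] X) (z : X) : Prop :=
  MapClusterPt 0 atTop (fun n : ℕ => (T ^ n) z) ∧ ¬ Tendsto (fun n : ℕ => (T ^ n) z) atTop (𝓝 0)

theorem isLiYorkePair_iff_semiIrregularVector_sub {x y : X} :
    IsLiYorkePair T x y ↔ SemiIrregularVector T (x - y) := by
  simp only [IsLiYorkePair, SemiIrregularVector, ← map_sub]
  exact and_congr liminf_enorm_eq_zero_iff_mapClusterPt limsup_enorm_pos_iff_not_tendsto

theorem SemiIrregularVector.smul {z : X} (hz : SemiIrregularVector T z) {c : 𝕜} (hc : c ≠ 0) :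
    SemiIrregularVector T (c • z) := by
  simp only [SemiIrregularVector, map_smul] at hz ⊢
  refine ⟨by simpa [Function.comp_def] using
    hz.1.continuousAt_comp (continuous_const_smul c).continuousAt, fun h => hz.2 ?_⟩
  simpa [inv_smul_smul₀ hc] using h.const_smul c⁻¹

theorem liYorkeChaotic_iff_exists_semiIrregularVector :
    LiYorkeChaotic T ↔ ∃ z, SemiIrregularVector T z := by
  constructor
  · rintro ⟨Γ, hΓ, hpair⟩
    obtain ⟨x, hx, y, hy, hxy⟩ : ∃ x ∈ Γ, ∃ y ∈ Γ, x ≠ y := by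
      by_contra! h
      exact hΓ (Subsingleton.countable h)
    exact ⟨x - y, isLiYorkePair_iff_semiIrregularVector_sub.1 (hpair x hx y hy hxy)⟩
  · rintro ⟨z, hz⟩
    have hz0 : z ≠ 0 := by
      rintro rfl
      exact hz.2 (by simp)
    refine ⟨range fun c : 𝕜 => c • z, ?_, ?_⟩
    · have : Uncountable 𝕜 := RCLike.ofReal_injective.uncountable
      exact fun h => not_countable_univ
        (by simpa using h.preimage (smul_left_injective 𝕜 hz0))
    · rintro _ ⟨a, rfl⟩ _ ⟨b, rfl⟩ hab
      rw [isLiYorkePair_iff_semiIrregularVector_sub, ← sub_smul]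
      exact hz.smul (sub_ne_zero.2 fun h => hab (h ▸ rfl))

theorem pow_apply_pow_apply_comm (m j : ℕ) (z : X) :
    (T ^ m) ((T ^ j) z) = (T ^ j) ((T ^ m) z) := by
  rw [← mul_apply_eq_comp, (Commute.pow_pow_self T m j).eq, mul_apply_eq_comp]

theorem tendsto_pow_apply_of_mapClusterPt_of_bound {z : X} {C : ℝ}
    (hC : ∀ m j : ℕ, ‖(T ^ m) ((T ^ j) z)‖ ≤ C * ‖(T ^ j) z‖)
    (h : MapClusterPt 0 atTop fun n : ℕ => (T ^ n) z) :
    Tendsto (fun n : ℕ => (T ^ n) z) atTop (𝓝 0) := by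
  rw [Metric.tendsto_atTop]
  intro ε hε
  have hC' : 0 < |C| + 1 := by positivity
  obtain ⟨j, hj⟩ := (h.frequently (Metric.ball_mem_nhds 0 (div_pos hε hC'))).exists
  rw [dist_zero_right, lt_div_iff₀ hC'] at hj
  refine ⟨j, fun n hn => ?_⟩
  rw [dist_zero_right, ← Nat.sub_add_cancel hn, pow_add, mul_apply_eq_comp]
  calc ‖(T ^ (n - j)) ((T ^ j) z)‖ ≤ C * ‖(T ^ j) z‖ := hC _ _
    _ ≤ (|C| + 1) * ‖(T ^ j) z‖ := by gcongr; linarith [le_abs_self C]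
    _ < ε := by linarith

theorem lyChaosCriterion_of_semiIrregularVector {z : X} (hz : SemiIrregularVector T z) :
    LYChaosCriterion T := by
  obtain ⟨ψ, hψ, hψz⟩ := hz.1.tendsto_subseq
  refine ⟨fun k => ψ (k + 1), range fun j => (T ^ j) z, fun a b h => hψ (by omega),
    fun k => (Nat.zero_le _).trans_lt (hψ k.succ_pos), ?_, ?_⟩
  · rintro _ ⟨j, rfl⟩
    simp only [pow_apply_pow_apply_comm _ j]
    simpa [Function.comp_def] using
      ((T ^ j).continuous.tendsto 0).comp (hψz.comp (tendsto_add_atTop_nat 1))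
  · by_contra! hbdd
    obtain ⟨C, hC⟩ := hbdd
    exact hz.2 (tendsto_pow_apply_of_mapClusterPt_of_bound
      (fun m j => hC m _ (subset_closure (Submodule.subset_span ⟨j, rfl⟩))) hz.1)

theorem exists_semiIrregularVector_of_lyChaosCriterion [CompleteSpace X]
    (h : LYChaosCriterion T) : ∃ z, SemiIrregularVector T z := by
  obtain ⟨n, X₀, hn, -, hX₀, hunb⟩ := h
  set D := Submodule.span 𝕜 X₀
  set Y := D.topologicalClosure
  have : CompleteSpace Y := D.isClosed_topologicalClosure.completeSpace_coe
  let g : ℕ → Y →L[𝕜] X := fun m => (T ^ m).comp Y.subtypeL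
  have hD : ∀ v ∈ D, Tendsto (fun k => (T ^ n k) v) atTop (𝓝 0) := by
    intro v hv
    induction hv using Submodule.span_induction with
    | mem x hx => exact hX₀ x hx
    | zero => simp
    | add x y _ _ hx hy => simpa using hx.add hy
    | smul c x _ hx => simpa using hx.const_smul c
  have hDdense : Dense {w : Y | (w : X) ∈ D} :=
    ((denseRange_inclusion_iff (s := (D : Set X)) subset_closure).2 subset_rfl).mono
      (by rintro _ ⟨v, rfl⟩; exact v.2)
  have hclust : ∀ᶠ w in residual Y, MapClusterPt 0 atTop fun m => g m w :=
    eventually_residual_mapClusterPt (fun m => (g m).continuous)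
      (hDdense.mono fun w hw => (hD w hw).mapClusterPt.of_comp hn.tendsto_atTop)
  have hg : ¬ BddAbove (range fun m => ‖g m‖) := by
    rintro ⟨C, hC⟩
    obtain ⟨m, y, hy, hlt⟩ := hunb C
    exact hlt.not_ge (((g m).le_opNorm ⟨y, hy⟩).trans
      (mul_le_mul_of_nonneg_right (hC ⟨m, rfl⟩) (norm_nonneg _)))
  have hlarge : ∀ᶠ w in residual Y, ∃ᶠ m in atTop, 1 < ‖g m w‖ := by
    refine eventually_residual_frequently_mem (U := fun m => {w | 1 < ‖g m w‖})
      (fun m => isOpen_lt continuous_const (g m).continuous.norm)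
      ((dense_setOf_not_bddAbove_norm_apply hg).mono ?_)
    intro w hw hev
    exact hw (isBoundedUnder_of_eventually_le (hev.mono fun _ h => not_lt.1 h)).bddAbove_range
  obtain ⟨w, hw₁, hw₂⟩ := (dense_of_mem_residual (hclust.and hlarge)).nonempty
  refine ⟨w, hw₁, fun ht => hw₂ ?_⟩
  filter_upwards [(tendsto_zero_iff_norm_tendsto_zero.1 ht).eventually (gt_mem_nhds one_pos)]
    with m hm using hm.not_gt

theorem lyChaosCriterion_iff_exists_semiIrregularVector [CompleteSpace X] :
    LYChaosCriterion T ↔ ∃ z, SemiIrregularVector T z :=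
  ⟨exists_semiIrregularVector_of_lyChaosCriterion, fun ⟨_, hz⟩ =>
    lyChaosCriterion_of_semiIrregularVector hz⟩

end LiYorke

/-- `T` is Li-Yorke chaotic iff it satisfies the Li-Yorke Chaos Criterion. -/
theorem liYorkeChaotic_iff_LYChaosCriterion
    {𝕜 : Type*} [RCLike 𝕜] {X : Type*} [NormedAddCommGroup X] [NormedSpace 𝕜 X]
    [CompleteSpace X] (T : X →L[𝕜] X) :
    LiYorkeChaotic T ↔ LYChaosCriterion T :=
  liYorkeChaotic_iff_exists_semiIrregularVector.trans
    lyChaosCriterion_iff_exists_semiIrregularVector.symm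
end

section
/- Let X be a Banach space and T : X → X a bounded linear operator such that there exists a dense set D ⊆ X with lim_{n→∞} T^n x = 0 for all x ∈ D. The following are equivalent: (i) T satisfies the Distributional Chaos Criterion; (ii) T admits a distributionally irregular vector; (iii) there exist a sequence (y_m) in X \ {0} and a sequence of positive integers (N_m) increasing to ∞ such that lim_m (1/N_m)·card{0 ≤ i < N_m : ‖T^i y_m‖ ≥ m‖y_m‖} = 1. -/
open Filter Topology
open scoped ENNReal

/-!
For every `r > 0`, the vectors `x` with `‖T ^ i x‖ < r` for a set of times `i` of upper density
one form a residual set: it is a countable intersection of open sets, each containing `D`. Under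
(iii) the same holds for `R < ‖T ^ i x‖`: a point `z ∈ D` has a bounded orbit, and `z + t • y m`,
with `t ‖y m‖` small but `t m ‖y m‖` large, exceeds `R` at most times below `N m`. By Baire some
`x` lies in all these sets, and a diagonal argument over the thresholds yields sequences of upper
density one along which `‖T ^ i x‖` tends to `0` and to `∞`. Conversely, a distributionally
irregular vector `x` satisfies the criterion with `y m = x`, with `x m ∈ D \ {0}` tending to `x`,
and with `N m` read off the upper density one of the times where `m ‖x‖ ≤ ‖T ^ i x‖`.
-/

section

open Set Metric

section UpperDensity

lemma ncard_inter_Iio_le (A : Set ℕ) (n : ℕ) : (A ∩ Iio n).ncard ≤ n :=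
  (ncard_le_ncard inter_subset_right (finite_Iio n)).trans_eq (ncard_Iio_nat n)

lemma ncard_inter_Icc_one_le (A : Set ℕ) (n : ℕ) : (A ∩ Icc 1 n).ncard ≤ n :=
  (ncard_le_ncard inter_subset_right (finite_Icc 1 n)).trans_eq (by simp)

lemma ncard_inter_Icc_one_le_ncard_inter_Iio_succ (A : Set ℕ) (n : ℕ) :
    (A ∩ Icc 1 n).ncard ≤ (A ∩ Iio (n + 1)).ncard :=
  ncard_le_ncard (inter_subset_inter_right A fun _ hi => Nat.lt_succ_of_le hi.2)
    ((finite_Iio _).inter_of_right A)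

lemma ncard_inter_Iio_le_ncard_inter_Icc_one_add_one (A : Set ℕ) (n : ℕ) :
    (A ∩ Iio n).ncard ≤ (A ∩ Icc 1 n).ncard + 1 := by
  refine (ncard_le_ncard (t := insert 0 (A ∩ Icc 1 n)) ?_
    (((finite_Icc 1 n).inter_of_right A).insert 0)).trans (ncard_insert_le _ _)
  rintro (_ | i) ⟨hiA, hin⟩
  · exact mem_insert 0 _
  · exact Or.inr ⟨hiA, by simp only [mem_Icc, mem_Iio] at hin ⊢; omega⟩

lemma ncard_le_ncard_add_of_subset_union_Iio {S B : Set ℕ} {n : ℕ} (hB : B.Finite)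
    (h : S ⊆ B ∪ Iio n) : S.ncard ≤ B.ncard + n :=
  (ncard_le_ncard h (hB.union (finite_Iio n))).trans
    ((ncard_union_le _ _).trans_eq (by rw [ncard_Iio_nat]))

lemma eventually_mul_add_le_mul {c c' : ℝ} (h : c < c') (K : ℝ) :
    ∀ᶠ n : ℕ in atTop, c * n + K ≤ c' * n :=
  ((tendsto_natCast_atTop_atTop.const_mul_atTop (sub_pos.2 h)).eventually_ge_atTop K).mono
    fun n hn => by rw [sub_mul] at hn; linarith

lemma tendsto_one_sub_one_div_add_one :
    Tendsto (fun m : ℕ => 1 - 1 / ((m : ℝ) + 1)) atTop (𝓝 1) := by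
  simpa using tendsto_const_nhds.sub (tendsto_one_div_add_atTop_nhds_zero_nat (𝕜 := ℝ))

/-- Counts over `[0, n)`, as the Distributional Chaos Criterion does, instead of the `[1, n]` of
`upperDensity`. -/
theorem upperDensity_eq_one_iff {A : Set ℕ} :
    upperDensity A = 1 ↔ ∀ c < (1 : ℝ), ∃ᶠ n : ℕ in atTop, c * n < (A ∩ Iio n).ncard := by
  set f : ℕ → ℝ := fun n => ((A ∩ Icc 1 n).ncard : ℝ) / n
  have hf0 : ∀ n, 0 ≤ f n := fun n => by positivity
  have hf1 : ∀ n, f n ≤ 1 := fun n =>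
    div_le_one_of_le₀ (by exact_mod_cast ncard_inter_Icc_one_le A n) n.cast_nonneg
  change limsup f atTop = 1 ↔ _
  constructor
  · intro h c hc
    obtain ⟨c', hcc', hc'⟩ := exists_between hc
    have hfreq : ∃ᶠ n in atTop, c' < f n :=
      frequently_lt_of_lt_limsup (isCoboundedUnder_le_of_le atTop hf0) (h ▸ hc')
    refine (tendsto_add_atTop_nat 1).frequently ((hfreq.and_eventually
      ((eventually_mul_add_le_mul hcc' c).and (eventually_gt_atTop 0))).mono ?_)
    rintro n ⟨hn, hcn, hn0⟩
    rw [lt_div_iff₀ (by exact_mod_cast hn0)] at hn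
    have := ncard_inter_Icc_one_le_ncard_inter_Iio_succ A n
    push_cast
    calc c * (n + 1) ≤ c' * n := by linarith
      _ < _ := hn
      _ ≤ _ := by exact_mod_cast this
  · intro h
    refine le_antisymm (limsup_le_of_le (isCoboundedUnder_le_of_le atTop hf0)
      (Eventually.of_forall hf1)) (le_of_forall_lt_imp_le_of_dense fun c hc => ?_)
    obtain ⟨c', hcc', hc'⟩ := exists_between hc
    refine le_limsup_of_frequently_le (((h c' hc').and_eventually
      ((eventually_mul_add_le_mul hcc' 1).and (eventually_gt_atTop 0))).mono ?_)
      (isBoundedUnder_of ⟨1, hf1⟩)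
    rintro n ⟨hn, hcn, hn0⟩
    have := ncard_inter_Iio_le_ncard_inter_Icc_one_add_one A n
    rw [le_div_iff₀ (by exact_mod_cast hn0)]
    have : ((A ∩ Iio n).ncard : ℝ) ≤ (A ∩ Icc 1 n).ncard + 1 := by exact_mod_cast this
    linarith

theorem upperDensity_eq_one_of_le_ncard {A : Set ℕ} {u : ℕ → ℕ} {ℓ : ℕ → ℝ}
    (hu : Tendsto u atTop atTop) (hℓ : Tendsto ℓ atTop (𝓝 1))
    (h : ∀ k, ℓ k * u k ≤ (A ∩ Iio (u k)).ncard) : upperDensity A = 1 := by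
  refine upperDensity_eq_one_iff.2 fun c hc => frequently_atTop.2 fun n₀ => ?_
  obtain ⟨k, hck, hk⟩ :=
    ((hℓ.eventually (lt_mem_nhds hc)).and (hu.eventually_ge_atTop (n₀ + 1))).exists
  exact ⟨u k, by omega,
    (mul_lt_mul_of_pos_right hck (by exact_mod_cast (show 0 < u k by omega))).trans_le (h k)⟩

theorem upperDensity_univ : upperDensity univ = 1 :=
  upperDensity_eq_one_of_le_ncard tendsto_id tendsto_const_nhds fun k => by simp

theorem upperDensity_eq_one_of_eventually_imp {A B : Set ℕ} (hA : upperDensity A = 1)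
    (hAB : ∀ᶠ i in atTop, i ∈ A → i ∈ B) : upperDensity B = 1 := by
  obtain ⟨i₀, hi₀⟩ := eventually_atTop.1 hAB
  refine upperDensity_eq_one_iff.2 fun c hc => ?_
  obtain ⟨c', hcc', hc'⟩ := exists_between hc
  refine ((upperDensity_eq_one_iff.1 hA c' hc').and_eventually
    (eventually_mul_add_le_mul hcc' i₀)).mono fun n ⟨hn, hcn⟩ => ?_
  have hsub : A ∩ Iio n ⊆ (B ∩ Iio n) ∪ Iio i₀ := fun i ⟨hiA, hin⟩ =>
    (lt_or_ge i i₀).elim Or.inr fun hi => Or.inl ⟨hi₀ i hi hiA, hin⟩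
  have : ((A ∩ Iio n).ncard : ℝ) ≤ (B ∩ Iio n).ncard + i₀ := by
    exact_mod_cast ncard_le_ncard_add_of_subset_union_Iio ((finite_Iio n).inter_of_right B) hsub
  linarith

theorem infinite_of_upperDensity_eq_one {A : Set ℕ} (hA : upperDensity A = 1) :
    A.Infinite := by
  intro hfin
  obtain ⟨n, hn, hnA⟩ := ((upperDensity_eq_one_iff.1 hA (1 / 2) (by norm_num)).and_eventually
    (eventually_mul_add_le_mul (show (0 : ℝ) < 1 / 2 by norm_num) A.ncard)).exists
  have : ((A ∩ Iio n).ncard : ℝ) ≤ A.ncard := by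
    exact_mod_cast ncard_le_ncard inter_subset_left hfin
  linarith

/-- Past `n k` the set keeps only elements of `E (k + 1)`; as `n (k + 1)` is much larger than
`n k`, the block `(n k, n (k + 1))` already carries almost all of `[0, n (k + 1))`. -/
theorem upperDensity_diagonal_eq_one {E : ℕ → Set ℕ} {n : ℕ → ℕ} (hE : Antitone E)
    (hn_succ : ∀ k, (k + 1) * (k + 2) * (n k + 1) ≤ n (k + 1))
    (hn : ∀ k : ℕ, (1 - 1 / ((k : ℝ) + 1)) * n k < (E k ∩ Iio (n k)).ncard) :
    upperDensity {i | 0 < i ∧ ∀ k, n k < i → i ∈ E (k + 1)} = 1 := by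
  have hmono : StrictMono n := strictMono_nat_of_lt_succ fun k =>
    (Nat.le_mul_of_pos_left _ (by positivity)).trans (hn_succ k)
  set A := {i | 0 < i ∧ ∀ k, n k < i → i ∈ E (k + 1)}
  refine upperDensity_eq_one_of_le_ncard (hmono.tendsto_atTop.comp (tendsto_add_atTop_nat 1))
    tendsto_one_sub_one_div_add_one fun k => ?_
  have hsub : E (k + 1) ∩ Iio (n (k + 1)) ⊆ (A ∩ Iio (n (k + 1))) ∪ Iio (n k + 1) := by
    rintro i ⟨hiE, hin⟩
    refine (lt_or_ge i (n k + 1)).elim Or.inr fun hki => Or.inl ⟨⟨by omega, fun j hj => ?_⟩, hin⟩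
    exact hE (Nat.succ_le_succ (Nat.lt_succ_iff.1 (hmono.lt_iff_lt.1 (hj.trans hin)))) hiE
  have hcard : ((E (k + 1) ∩ Iio (n (k + 1))).ncard : ℝ) ≤
      (A ∩ Iio (n (k + 1))).ncard + (n k + 1) := by
    exact_mod_cast ncard_le_ncard_add_of_subset_union_Iio ((finite_Iio _).inter_of_right A) hsub
  have hgrow : ((k : ℝ) + 1) * (k + 2) * (n k + 1) ≤ n (k + 1) := by exact_mod_cast hn_succ k
  have hk := hn (k + 1)
  push_cast at hk
  have hsplit : (1 - 1 / ((k : ℝ) + 1)) * n (k + 1)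
      = (1 - 1 / ((k : ℝ) + 1 + 1)) * n (k + 1) - n (k + 1) / ((k + 1) * (k + 2)) := by
    field_simp; ring
  have hq : (n k : ℝ) + 1 ≤ n (k + 1) / ((k + 1) * (k + 2)) := by
    rw [le_div_iff₀ (by positivity)]; linarith
  simp only [Function.comp]
  linarith

theorem exists_upperDensity_eq_one_eventually_mem {E : ℕ → Set ℕ} (hE : Antitone E)
    (h : ∀ k, upperDensity (E k) = 1) :
    ∃ A : Set ℕ, upperDensity A = 1 ∧ 0 ∉ A ∧ ∀ k, ∀ᶠ i in atTop, i ∈ A → i ∈ E k := by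
  have hfreq : ∀ k n₀ : ℕ, ∃ n ≥ n₀, (1 - 1 / ((k : ℝ) + 1)) * n < (E k ∩ Iio n).ncard :=
    fun k => frequently_atTop.1
      (upperDensity_eq_one_iff.1 (h k) _ (sub_lt_self 1 Nat.one_div_pos_of_nat))
  choose F hF_ge hF using hfreq
  obtain ⟨n, hn_succ, hn⟩ : ∃ n : ℕ → ℕ, (∀ k, (k + 1) * (k + 2) * (n k + 1) ≤ n (k + 1)) ∧
      ∀ k : ℕ, (1 - 1 / ((k : ℝ) + 1)) * n k < (E k ∩ Iio (n k)).ncard :=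
    ⟨fun k => Nat.rec (F 0 0) (fun k nk => F (k + 1) ((k + 1) * (k + 2) * (nk + 1))) k,
      fun k => hF_ge _ _, by rintro (_ | k) <;> exact hF _ _⟩
  exact ⟨_, upperDensity_diagonal_eq_one hE hn_succ hn, fun h0 => lt_irrefl 0 h0.1, fun k =>
    (eventually_gt_atTop (n k)).mono fun i hi hiA => hE k.le_succ (hiA.2 k hi)⟩

theorem exists_strictMono_upperDensity_range_eq_one {E : ℕ → Set ℕ} (hE : Antitone E)
    (h : ∀ k, upperDensity (E k) = 1) :
    ∃ a : ℕ → ℕ, StrictMono a ∧ (∀ j, 0 < a j) ∧ upperDensity (range a) = 1 ∧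
      ∀ k, ∀ᶠ j in atTop, a j ∈ E k := by
  obtain ⟨A, hA, hA0, hAE⟩ := exists_upperDensity_eq_one_eventually_mem hE h
  have hinf : (ofPred (· ∈ A)).Infinite := infinite_of_upperDensity_eq_one hA
  have hmem := Nat.nth_mem_of_infinite hinf
  refine ⟨Nat.nth (· ∈ A), Nat.nth_strictMono hinf,
    fun j => Nat.pos_of_ne_zero fun h0 => hA0 (h0 ▸ hmem j),
    by rwa [Nat.range_nth_of_infinite hinf], fun k => ?_⟩
  exact ((Nat.nth_strictMono hinf).tendsto_atTop.eventually (hAE k)).mono fun j hj => hj (hmem j)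

end UpperDensity

section Residual

variable {X : Type*} [TopologicalSpace X]

instance residual_neBot [BaireSpace X] [Nonempty X] : (residual X).NeBot :=
  ⟨fun h => (dense_of_mem_residual (h ▸ mem_bot : ∅ ∈ residual X)).nonempty.ne_empty rfl⟩

lemma isOpen_setOf_lt_ncard_inter_Iio {U : ℕ → Set X} (hU : ∀ i, IsOpen (U i)) (c : ℝ) (n : ℕ) :
    IsOpen {x | c < ({i | x ∈ U i} ∩ Iio n).ncard} := by
  refine isOpen_iff_mem_nhds.2 fun x hx => ?_
  have hfin : ({i | x ∈ U i} ∩ Iio n).Finite := (finite_Iio n).inter_of_right _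
  filter_upwards [hfin.eventually_all.2 fun i hi => (hU i).mem_nhds hi.1] with y hy
  have hsub : {i | x ∈ U i} ∩ Iio n ⊆ {i | y ∈ U i} ∩ Iio n := fun i hi => ⟨hy i hi, hi.2⟩
  exact hx.trans_le (by exact_mod_cast ncard_le_ncard hsub ((finite_Iio n).inter_of_right _))

theorem eventually_residual_upperDensity_eq_one {U : ℕ → Set X} (hU : ∀ i, IsOpen (U i))
    (hdense : ∀ c < (1 : ℝ), ∀ n₀ : ℕ,
      Dense (⋃ n ≥ n₀, {x | c * n < ({i | x ∈ U i} ∩ Iio n).ncard})) :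
    ∀ᶠ x in residual X, upperDensity {i | x ∈ U i} = 1 := by
  have hfreq : ∀ j : ℕ, ∀ᶠ x in residual X, ∃ᶠ n : ℕ in atTop,
      (1 - 1 / ((j : ℝ) + 1)) * n < ({i | x ∈ U i} ∩ Iio n).ncard := fun j => by
    simp only [frequently_atTop]
    refine eventually_countable_forall.2 fun n₀ => ?_
    refine mem_of_superset (residual_of_dense_open
      (isOpen_iUnion fun n => isOpen_iUnion fun _ => isOpen_setOf_lt_ncard_inter_Iio hU _ n)
      (hdense (1 - 1 / ((j : ℝ) + 1)) (sub_lt_self 1 Nat.one_div_pos_of_nat) n₀)) fun x hx => ?_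
    simpa using hx
  filter_upwards [eventually_countable_forall.2 hfreq] with x hx
  refine upperDensity_eq_one_iff.2 fun c hc => ?_
  obtain ⟨j, hj⟩ := (tendsto_one_sub_one_div_add_one.eventually (lt_mem_nhds hc)).exists
  exact (hx j).mono fun n hn => lt_of_le_of_lt (by gcongr) hn

end Residual

section Operator

variable {𝕜 : Type*} [RCLike 𝕜] {X : Type*} [NormedAddCommGroup X] [NormedSpace 𝕜 X]
  {T : X →L[𝕜] X} {D : Set X}

theorem eventually_residual_upperDensity_pow_apply_mem_ball (hD : Dense D)
    (hD0 : ∀ z ∈ D, Tendsto (fun n : ℕ => (T ^ n) z) atTop (𝓝 0)) {r : ℝ} (hr : 0 < r) :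
    ∀ᶠ x in residual X, upperDensity {i | (T ^ i) x ∈ ball 0 r} = 1 := by
  refine eventually_residual_upperDensity_eq_one (fun i => isOpen_ball.preimage (T ^ i).continuous)
    fun c hc n₀ => hD.mono fun z hz => ?_
  have hz_dens : upperDensity {i | (T ^ i) z ∈ ball 0 r} = 1 :=
    upperDensity_eq_one_of_eventually_imp upperDensity_univ
      (((hD0 z hz).eventually (ball_mem_nhds 0 hr)).mono fun i hi _ => hi)
  obtain ⟨n, hn, hcn⟩ := frequently_atTop.1 (upperDensity_eq_one_iff.1 hz_dens c hc) n₀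
  exact mem_iUnion₂.2 ⟨n, hn, hcn⟩

variable {y : ℕ → X} {N : ℕ → ℕ}

lemma exists_dist_lt_mul_lt_ncard_lt_norm_pow_apply (hy : ∀ m, y m ≠ 0) (hN : ∀ m, 0 < N m)
    (hNtop : Tendsto N atTop atTop)
    (hratio : Tendsto (fun m : ℕ =>
      (({i : ℕ | i < N m ∧ (m : ℝ) * ‖y m‖ ≤ ‖(T ^ i) (y m)‖}).ncard : ℝ) / N m) atTop (𝓝 1))
    {z : X} {B : ℝ} (hB : ∀ i, ‖(T ^ i) z‖ ≤ B) {δ : ℝ} (hδ : 0 < δ)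
    (R : ℝ) {c : ℝ} (hc : c < 1) (n₀ : ℕ) :
    ∃ x, dist z x < δ ∧ ∃ n ≥ n₀, c * n < ({i | R < ‖(T ^ i) x‖} ∩ Iio n).ncard := by
  obtain ⟨m, hmn₀, hm_ratio, hm_large⟩ := ((hNtop.eventually_ge_atTop n₀).and
    ((hratio.eventually (lt_mem_nhds hc)).and
      (tendsto_natCast_atTop_atTop.eventually_gt_atTop (2 * (R + B) / δ)))).exists
  have hym : 0 < ‖y m‖ := norm_pos_iff.2 (hy m)
  set t : ℝ := δ / 2 / ‖y m‖ with ht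
  have ht_pos : 0 < t := by positivity
  refine ⟨z + (t : 𝕜) • y m, ?_, N m, hmn₀, ?_⟩
  · rw [dist_self_add_right, norm_smul, RCLike.norm_ofReal, abs_of_pos ht_pos, ht,
      div_mul_cancel₀ _ hym.ne']
    linarith
  have hsub : {i | i < N m ∧ (m : ℝ) * ‖y m‖ ≤ ‖(T ^ i) (y m)‖} ⊆
      {i | R < ‖(T ^ i) (z + (t : 𝕜) • y m)‖} ∩ Iio (N m) := by
    rintro i ⟨hi, hiy⟩
    refine ⟨show R < _ from ?_, hi⟩
    have hlarge : δ / 2 * m ≤ t * ‖(T ^ i) (y m)‖ := by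
      calc δ / 2 * m = t * (m * ‖y m‖) := by rw [ht]; field_simp
        _ ≤ t * ‖(T ^ i) (y m)‖ := by gcongr
    have htri : t * ‖(T ^ i) (y m)‖ ≤ ‖(T ^ i) (z + (t : 𝕜) • y m)‖ + ‖(T ^ i) z‖ := by
      rw [map_add, map_smul]
      calc t * ‖(T ^ i) (y m)‖ = ‖((T ^ i) z + (t : 𝕜) • (T ^ i) (y m)) - (T ^ i) z‖ := by
            rw [add_sub_cancel_left, norm_smul, RCLike.norm_ofReal, abs_of_pos ht_pos]
        _ ≤ _ := norm_sub_le _ _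
    rw [div_lt_iff₀ hδ] at hm_large
    linarith [hB i]
  rw [lt_div_iff₀ (by exact_mod_cast hN m)] at hm_ratio
  exact hm_ratio.trans_le (by exact_mod_cast ncard_le_ncard hsub ((finite_Iio _).inter_of_right _))

theorem eventually_residual_upperDensity_lt_norm_pow_apply (hD : Dense D)
    (hD0 : ∀ z ∈ D, Tendsto (fun n : ℕ => (T ^ n) z) atTop (𝓝 0)) (hy : ∀ m, y m ≠ 0)
    (hN : ∀ m, 0 < N m) (hNtop : Tendsto N atTop atTop)
    (hratio : Tendsto (fun m : ℕ =>
      (({i : ℕ | i < N m ∧ (m : ℝ) * ‖y m‖ ≤ ‖(T ^ i) (y m)‖}).ncard : ℝ) / N m) atTop (𝓝 1))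
    (R : ℝ) :
    ∀ᶠ x in residual X, upperDensity {i | R < ‖(T ^ i) x‖} = 1 := by
  refine eventually_residual_upperDensity_eq_one
    (fun i => isOpen_lt continuous_const (T ^ i).continuous.norm) fun c hc n₀ =>
      (hD.mono fun z hz => Metric.mem_closure_iff.2 fun δ hδ => ?_).of_closure
  obtain ⟨B, hB⟩ := (hD0 z hz).norm.bddAbove_range
  obtain ⟨x, hzx, n, hn, hcn⟩ := exists_dist_lt_mul_lt_ncard_lt_norm_pow_apply hy hN hNtop
    hratio (fun i => hB (mem_range_self i)) hδ R hc n₀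
  exact ⟨x, mem_iUnion₂.2 ⟨n, hn, hcn⟩, hzx⟩

theorem exists_distIrregularVector_of_ratio_tendsto_one [CompleteSpace X] (hD : Dense D)
    (hD0 : ∀ z ∈ D, Tendsto (fun n : ℕ => (T ^ n) z) atTop (𝓝 0)) (hy : ∀ m, y m ≠ 0)
    (hN : ∀ m, 0 < N m) (hNtop : Tendsto N atTop atTop)
    (hratio : Tendsto (fun m : ℕ =>
      (({i : ℕ | i < N m ∧ (m : ℝ) * ‖y m‖ ≤ ‖(T ^ i) (y m)‖}).ncard : ℝ) / N m) atTop (𝓝 1)) :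
    ∃ x, DistIrregularVector T x := by
  have small := fun k : ℕ => eventually_residual_upperDensity_pow_apply_mem_ball hD hD0
    (Nat.one_div_pos_of_nat (n := k))
  have large := fun k : ℕ =>
    eventually_residual_upperDensity_lt_norm_pow_apply hD hD0 hy hN hNtop hratio k
  obtain ⟨x, hx_small, hx_large⟩ :=
    ((eventually_countable_forall.2 small).and (eventually_countable_forall.2 large)).exists
  have small_anti : Antitone fun k : ℕ => {i | (T ^ i) x ∈ ball 0 (1 / ((k : ℝ) + 1))} :=
    fun k l hkl i hi => ball_subset_ball (Nat.one_div_le_one_div hkl) hi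
  have large_anti : Antitone fun k : ℕ => {i | (k : ℝ) < ‖(T ^ i) x‖} :=
    fun k l hkl i (hi : (l : ℝ) < _) => (Nat.cast_le.2 hkl).trans_lt hi
  obtain ⟨a, ha, ha0, ha_dens, ha_small⟩ :=
    exists_strictMono_upperDensity_range_eq_one small_anti hx_small
  obtain ⟨b, hb, hb0, hb_dens, hb_large⟩ :=
    exists_strictMono_upperDensity_range_eq_one large_anti hx_large
  refine ⟨x, a, b, ha, hb, ha0, hb0, ha_dens, hb_dens, ?_, ?_⟩
  · simpa using (nhds_basis_ball_inv_nat_succ.tendsto_right_iff.2 fun k _ => ha_small k).norm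
  · exact tendsto_atTop.2 fun R => (hb_large ⌈R⌉₊).mono fun j hj => (Nat.le_ceil R).trans hj.le

theorem DistIrregularVector.dcCriterion (hD : Dense D)
    (hD0 : ∀ z ∈ D, Tendsto (fun n : ℕ => (T ^ n) z) atTop (𝓝 0)) {x : X}
    (hx : DistIrregularVector T x) : DCCriterion T := by
  obtain ⟨-, b, -, hb, -, -, -, hb_dens, -, hb_top⟩ := hx
  have hx0 : x ≠ 0 := by
    rintro rfl
    obtain ⟨k, hk⟩ := (hb_top.eventually_gt_atTop 0).exists
    simp at hk
  have hfreq : ∀ m : ℕ, ∃ᶠ n : ℕ in atTop, (1 - 1 / ((m : ℝ) + 1)) * n <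
      ({i | (m : ℝ) * ‖x‖ ≤ ‖(T ^ i) x‖} ∩ Iio n).ncard ∧ 0 < n := fun m => by
    refine (upperDensity_eq_one_iff.1 (upperDensity_eq_one_of_eventually_imp hb_dens ?_) _
      (sub_lt_self 1 Nat.one_div_pos_of_nat)).and_eventually (eventually_gt_atTop 0)
    obtain ⟨K, hK⟩ := eventually_atTop.1 (hb_top.eventually_ge_atTop ((m : ℝ) * ‖x‖))
    filter_upwards [eventually_ge_atTop (b K)] with i hi ⟨k, hk⟩
    subst hk
    exact hK k (hb.le_iff_le.1 hi)
  obtain ⟨N, hN_mono, hN⟩ := extraction_forall_of_frequently hfreq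
  have : Nontrivial X := ⟨⟨x, 0, hx0⟩⟩
  have := Module.punctured_nhds_neBot 𝕜 X 0
  obtain ⟨u, hu, hux⟩ := mem_closure_iff_seq_limit.1 (hD.sdiff_singleton 0 x)
  refine ⟨u, fun _ => x, N, fun m => (hu m).2, fun _ => hx0, fun _ => mem_closure_of_tendsto hux
    (Eventually.of_forall fun m => Submodule.subset_span (mem_range_self m)),
    fun m => hD0 _ (hu m).1, fun m => (hN m).2, hN_mono.monotone, hN_mono.tendsto_atTop, ?_⟩
  have hcount : ∀ m : ℕ, {i | i < N m ∧ (m : ℝ) * ‖x‖ ≤ ‖(T ^ i) x‖} =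
      {i | (m : ℝ) * ‖x‖ ≤ ‖(T ^ i) x‖} ∩ Iio (N m) := fun m => ext fun i => and_comm
  beta_reduce
  simp only [hcount]
  refine tendsto_of_tendsto_of_tendsto_of_le_of_le tendsto_one_sub_one_div_add_one
    tendsto_const_nhds (fun m => ?_) fun m =>
      div_le_one_of_le₀ (Nat.cast_le.2 (ncard_inter_Iio_le _ _)) (Nat.cast_nonneg _)
  rw [le_div_iff₀ (Nat.cast_pos.2 (hN m).2)]
  exact (hN m).1.le

end Operator

end

/-- For operators whose orbits tend to zero on a dense set, the DCC is equivalent to the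
existence of a distributionally irregular vector, and to condition (iii). -/
theorem DCC_iff_distIrregularVector_of_denseOrbitsToZero
    {𝕜 : Type*} [RCLike 𝕜] {X : Type*} [NormedAddCommGroup X] [NormedSpace 𝕜 X]
    [CompleteSpace X] (T : X →L[𝕜] X) (D : Set X) (hD : Dense D)
    (hD0 : ∀ x ∈ D, Filter.Tendsto (fun n : ℕ => (T ^ n) x) Filter.atTop (nhds 0)) :
    (DCCriterion T ↔ ∃ x : X, DistIrregularVector T x) ∧
    (DCCriterion T ↔
      ∃ y : ℕ → X, (∀ m, y m ≠ 0) ∧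
        ∃ N : ℕ → ℕ, (∀ m, 0 < N m) ∧ Monotone N ∧
          Filter.Tendsto N Filter.atTop Filter.atTop ∧
          Filter.Tendsto (fun m : ℕ =>
              (({i : ℕ | i < N m ∧ (m : ℝ) * ‖y m‖ ≤ ‖(T ^ i) (y m)‖}).ncard : ℝ) / N m)
            Filter.atTop (nhds 1)) := by
  have dcc_to_irregular : DCCriterion T → ∃ x : X, DistIrregularVector T x :=
    fun ⟨_, _, _, _, hy, _, _, hN, _, hN_top, hratio⟩ =>
      exists_distIrregularVector_of_ratio_tendsto_one hD hD0 hy hN hN_top hratio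
  have irregular_to_dcc : (∃ x : X, DistIrregularVector T x) → DCCriterion T :=
    fun ⟨_, hx⟩ => hx.dcCriterion hD hD0
  exact ⟨⟨dcc_to_irregular, irregular_to_dcc⟩,
    fun ⟨_, y, N, _, hy, _, _, hN, hN_mono, hN_top, hratio⟩ =>
      ⟨y, hy, N, hN, hN_mono, hN_top, hratio⟩,
    fun ⟨_, hy, _, hN, _, hN_top, hratio⟩ => irregular_to_dcc
      (exists_distIrregularVector_of_ratio_tendsto_one hD hD0 hy hN hN_top hratio)⟩
end
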